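/- Truth lemma for the canonical model K of ℜ: for every formula φ ∈ Φ₀ and every world (w,ψ) of K, φ ∈ w if and only if (w,ψ) ⊩ φ. -/

import Mathlib

/-- Formulas of the modal language 𝓛: propositional variables, ⊥, →, and ▷. -/
inductive Formula : Type
  | var : ℕ → Formula
  | bot : Formula
  | imp : Formula → Formula → Formula
  | tri : Formula → Formula → Formula
deriving DecidableEq

namespace Formula

/-- ¬φ := φ → ⊥ -/
def neg (φ : Formula) : Formula := imp φ bot
/-- ⊤ := ¬⊥ -/
def top : Formula := neg bot
/-- φ ∨ ψ := ¬φ → ψ -/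
def disj (φ ψ : Formula) : Formula := imp (neg φ) ψ
/-- φ ∧ ψ := ¬(φ → ¬ψ) -/
def conj (φ ψ : Formula) : Formula := neg (imp φ (neg ψ))

/-- `φ` is a substitution instance of a classical propositional tautology:
it evaluates to `true` under every boolean valuation of formulas that
respects `⊥` and `→` (variables and `▷`-formulas are treated as atoms). -/
def IsPropTaut (φ : Formula) : Prop :=
  ∀ v : Formula → Bool, v bot = false →
    (∀ a b, v (imp a b) = (!(v a) || v b)) → v φ = true

/-- Hilbert-style provability.  `Prv false` is the logic ℜ (axioms: classical
tautologies, A1, A2, A3; rules: Modus Ponens and monotonicity M);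
`Prv true` is the logic ℜ_d, which additionally has axiom A4. -/
inductive Prv : Bool → Formula → Prop
  | taut {d : Bool} {φ} : IsPropTaut φ → Prv d φ
  | a1 {d : Bool} (φ ψ χ) : Prv d (imp (tri φ ψ) (imp (tri χ ψ) (tri (disj φ χ) ψ)))
  | a2 {d : Bool} (φ) : Prv d (tri bot φ)
  | a3 {d : Bool} (φ) : Prv d (tri φ top)
  | a4 (φ ψ χ) : Prv true (imp (tri φ ψ) (imp (tri φ χ) (tri φ (conj ψ χ))))
  | mp {d : Bool} {φ ψ} : Prv d (imp φ ψ) → Prv d φ → Prv d ψ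
  | mono {d : Bool} {φ₁ φ₂ ψ₁ ψ₂} : Prv d (imp φ₁ φ₂) → Prv d (imp ψ₁ ψ₂) →
      Prv d (imp (tri φ₂ ψ₁) (tri φ₁ ψ₂))

/-- `Deriv d Δ φ`: φ is derivable from the hypotheses Δ together with all
theorems of the logic (`Prv d`) using only Modus Ponens. -/
inductive Deriv (d : Bool) (Δ : Set Formula) : Formula → Prop
  | hyp {φ} : φ ∈ Δ → Deriv d Δ φ
  | thm {φ} : Prv d φ → Deriv d Δ φ
  | mp {φ ψ} : Deriv d Δ (imp φ ψ) → Deriv d Δ φ → Deriv d Δ ψ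

/-- Conjunction of a list of formulas (empty conjunction is ⊤). -/
def conjList : List Formula → Formula
  | [] => top
  | φ :: l => conj φ (conjList l)

/-- ⋀Γ : conjunction of all formulas of a finite set Γ (⋀∅ = ⊤). -/
noncomputable def bigConj (Γ : Finset Formula) : Formula := conjList Γ.toList

/-- A set of formulas is consistent if ⊥ is not derivable from it. -/
def Consistent (d : Bool) (Δ : Set Formula) : Prop := ¬ Deriv d Δ bot

/-- The pair (u,v) is w-consistent: w ⊬ ⋀u ▷ ¬⋀v. -/
def WCons (d : Bool) (w : Set Formula) (u v : Finset Formula) : Prop :=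
  ¬ Deriv d w (tri (bigConj u) (neg (bigConj v)))

/-- The operation ∼: ∼(¬φ) = φ, and ∼φ = ¬φ if φ is not a negation. -/
def simNeg : Formula → Formula
  | imp φ bot => φ
  | φ => neg φ

/-- Φ is closed under subformulas. -/
def SubClosed (Φ : Finset Formula) : Prop :=
  (∀ a b, imp a b ∈ Φ → a ∈ Φ ∧ b ∈ Φ) ∧ (∀ a b, tri a b ∈ Φ → a ∈ Φ ∧ b ∈ Φ)

/-- Φ is closed under the operation ∼. -/
def SimClosed (Φ : Finset Formula) : Prop := ∀ φ ∈ Φ, simNeg φ ∈ Φ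

/-- w is a maximal consistent subset of Φ: w ⊆ Φ, w is consistent, and for
every φ ∈ Φ either φ ∈ w or ∼φ ∈ w. -/
def MaxCons (d : Bool) (Φ : Finset Formula) (w : Finset Formula) : Prop :=
  w ⊆ Φ ∧ Consistent d ↑w ∧ ∀ φ ∈ Φ, φ ∈ w ∨ simNeg φ ∈ w

/-- Kripke forcing: `rel w u v` means u →_w v, `val w p` means w ⊩ p. -/
def Forces {W : Type*} (rel : W → W → W → Prop) (val : W → ℕ → Prop) :
    W → Formula → Prop
  | w, var p => val w p
  | _, bot => False
  | w, imp a b => Forces rel val w a → Forces rel val w b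
  | w, tri a b => ∀ u v, rel w u v → Forces rel val u a →
      ∃ v', rel w u v' ∧ Forces rel val v' b

end Formula

/-- A Kripke model: a finite set of worlds, a ternary computability relation,
and a forcing relation between worlds and propositional variables. -/
structure KripkeModel where
  W : Type
  fin : Finite W
  rel : W → W → W → Prop
  val : W → ℕ → Prop

/-- A Kripke model is deterministic if for all worlds w, u there is at most
one v with u →_w v. -/
def KripkeModel.Deterministic (M : KripkeModel) : Prop :=
  ∀ w u v v', M.rel w u v → M.rel w u v' → v = v'

/-- Forcing in a Kripke model. -/
def KripkeModel.Forces (M : KripkeModel) : M.W → Formula → Prop :=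
  Formula.Forces M.rel M.val

/-- The standard enumeration of nondeterministic partial recursive functions:
ζ_w(u) = the set of possible outputs of machine (code) w on input u. -/
def zeta (w u : ℕ) : Set ℕ :=
  {v | ((Denumerable.ofNat Nat.Partrec.Code w).eval (Nat.pair u v)).Dom}

/-- The standard enumeration of deterministic partial recursive functions:
ξ_w(u) = the value of the partial recursive function with code w on input u. -/
def xi (w u : ℕ) : Part ℕ :=
  (Denumerable.ofNat Nat.Partrec.Code w).eval u

namespace Formula

/-- Set semantics for nondeterministic partial recursive functions
(existential reading of ▷). -/
def semN (val : ℕ → Set ℕ) : Formula → Set ℕ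
  | var p => val p
  | bot => ∅
  | imp a b => (Set.univ \ semN val a) ∪ semN val b
  | tri a b => {w | ∀ u ∈ semN val a, zeta w u ≠ ∅ → zeta w u ∩ semN val b ≠ ∅}

/-- Set semantics for deterministic partial recursive functions. -/
def semD (val : ℕ → Set ℕ) : Formula → Set ℕ
  | var p => val p
  | bot => ∅
  | imp a b => (Set.univ \ semD val a) ∪ semD val b
  | tri a b => {w | ∀ u ∈ semD val a, ∀ h : (xi w u).Dom, (xi w u).get h ∈ semD val b}

/-- Universal set semantics for nondeterministic partial recursive functions:
every terminating computation path from φ* ends in ψ*. -/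
def semU (val : ℕ → Set ℕ) : Formula → Set ℕ
  | var p => val p
  | bot => ∅
  | imp a b => (Set.univ \ semU val a) ∪ semU val b
  | tri a b => {w | ∀ u ∈ semU val a, zeta w u ⊆ semU val b}

/-- A canonical injective encoding of formulas as natural numbers. -/
def enc : Formula → ℕ
  | var n => 4 * n
  | bot => 1
  | imp a b => 4 * Nat.pair (enc a) (enc b) + 2
  | tri a b => 4 * Nat.pair (enc a) (enc b) + 3

end Formula

namespace Formula

/-- Worlds of the canonical Kripke model K for ℜ over Φ₀: pairs (w,φ) where w
is a maximal consistent (in ℜ) subset of Φ₀ and φ ∈ Φ₀. -/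
def KWorld (Φ₀ : Finset Formula) : Type :=
  {p : Finset Formula × Formula // MaxCons false Φ₀ p.1 ∧ p.2 ∈ Φ₀}

/-- Computability relation of K: (u,ψ) →_{(w,φ)} (v,χ) iff the pair (u,{ψ})
is w-consistent in ℜ and ψ ∈ v. -/
def Krel (Φ₀ : Finset Formula) :
    KWorld Φ₀ → KWorld Φ₀ → KWorld Φ₀ → Prop :=
  fun W U V => WCons false (↑W.1.1 : Set Formula) U.1.1 {U.1.2} ∧ U.1.2 ∈ V.1.1

/-- Atomic forcing of K: (w,φ) ⊩ p iff p ∈ w. -/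
def Kval (Φ₀ : Finset Formula) : KWorld Φ₀ → ℕ → Prop :=
  fun W n => var n ∈ W.1.1

/-! The truth lemma goes by induction on `φ`; atoms, `⊥` and `→` are handled by the usual
properties of maximal consistent sets. If `a ▷ b ∈ w` and `(u,θ) →_w (v,χ)` with `a ∈ u`, then
`{θ, b}` is consistent, since otherwise `⊢ b → ¬θ` and rule M turn `w ⊢ a ▷ b` into
`w ⊢ ⋀u ▷ ¬⋀{θ}`; a maximal extension `t` of `{θ, b}` yields the successor `(t, b)`.
Conversely, if `w ⊬ a ▷ b`, some maximal consistent `u ∋ a` makes `(u, {∼b})` `w`-consistent: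
otherwise A1 and A2 give `w ⊢ (⋁ ⋀u) ▷ ¬⋀{∼b}`, the disjunction ranging over all complete
`u ∋ a`, and since `a` propositionally implies that disjunction, M gives `w ⊢ a ▷ b`. The world
`(u, ∼b)` then reaches only worlds containing `∼b`, so it refutes `a ▷ b` at `w`. -/

def disjList : List Formula → Formula
  | [] => bot
  | φ :: l => disj φ (disjList l)

structure IsValuation (v : Formula → Bool) : Prop where
  bot : v bot = false
  imp : ∀ a b, v (imp a b) = (!(v a) || v b)

namespace IsValuation

variable {v : Formula → Bool}

theorem neg (hv : IsValuation v) (φ : Formula) : v (neg φ) = !(v φ) := by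
  simp [Formula.neg, hv.imp, hv.bot]

theorem top (hv : IsValuation v) : v top = true := by
  simp [Formula.top, hv.neg, hv.bot]

theorem disj (hv : IsValuation v) (φ ψ : Formula) : v (disj φ ψ) = (v φ || v ψ) := by
  simp [Formula.disj, hv.imp, hv.neg]

theorem conj (hv : IsValuation v) (φ ψ : Formula) : v (conj φ ψ) = (v φ && v ψ) := by
  simp only [Formula.conj, hv.neg, hv.imp]
  cases v φ <;> cases v ψ <;> rfl

theorem simNeg (hv : IsValuation v) (φ : Formula) : v (simNeg φ) = !(v φ) := by
  match φ with
  | .imp a .bot => simp only [Formula.simNeg, hv.imp, hv.bot, Bool.or_false, Bool.not_not]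
  | .var _ | .bot | .tri _ _ | .imp _ (.var _) | .imp _ (.imp _ _) | .imp _ (.tri _ _) =>
    exact hv.neg _

theorem bigConj_singleton (hv : IsValuation v) (φ : Formula) : v (bigConj {φ}) = v φ := by
  simp [bigConj, Formula.conjList, hv.conj, hv.top]

theorem conjList (hv : IsValuation v) (L : List Formula) : v (conjList L) = L.all v := by
  induction L with
  | nil => exact hv.top
  | cons x l ih => simp [Formula.conjList, hv.conj, ih]

theorem disjList (hv : IsValuation v) (L : List Formula) : v (disjList L) = L.any v := by
  induction L with
  | nil => exact hv.bot
  | cons x l ih => simp [Formula.disjList, hv.disj, ih]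

end IsValuation

theorem Prv.of_isValuation {d : Bool} {φ : Formula} (h : ∀ v, IsValuation v → v φ = true) :
    Prv d φ :=
  Prv.taut fun v h0 h1 => h v ⟨h0, h1⟩

section Derivability

variable {d : Bool}

namespace Prv

theorem imp_refl (φ : Formula) : Prv d (imp φ φ) :=
  of_isValuation fun v hv => by simp [hv.imp]

theorem imp_intro (φ ψ : Formula) : Prv d (imp φ (imp ψ φ)) :=
  of_isValuation fun v hv => by simp only [hv.imp]; cases v φ <;> cases v ψ <;> rfl

theorem imp_distrib (φ ψ χ : Formula) :
    Prv d (imp (imp φ (imp ψ χ)) (imp (imp φ ψ) (imp φ χ))) :=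
  of_isValuation fun v hv => by
    simp only [hv.imp]; cases v φ <;> cases v ψ <;> cases v χ <;> rfl

theorem imp_trans {φ ψ χ : Formula} (h₁ : Prv d (imp φ ψ)) (h₂ : Prv d (imp ψ χ)) :
    Prv d (imp φ χ) := by
  have h : Prv d (imp (imp φ ψ) (imp (imp ψ χ) (imp φ χ))) :=
    of_isValuation fun v hv => by
      simp only [hv.imp]; cases v φ <;> cases v ψ <;> cases v χ <;> rfl
  exact mp (mp h h₁) h₂

theorem conjList_imp_of_mem {φ : Formula} {L : List Formula} (h : φ ∈ L) :
    Prv d (imp (conjList L) φ) := by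
  induction L with
  | nil => cases h
  | cons ψ L ih =>
    have left : Prv d (imp (conj ψ (conjList L)) ψ) :=
      of_isValuation fun v hv => by
        simp only [hv.imp, hv.conj]; cases v ψ <;> cases v (conjList L) <;> rfl
    have right : Prv d (imp (conj ψ (conjList L)) (conjList L)) :=
      of_isValuation fun v hv => by
        simp only [hv.imp, hv.conj]; cases v ψ <;> cases v (conjList L) <;> rfl
    rcases List.mem_cons.1 h with rfl | h
    · exact left
    · exact imp_trans right (ih h)

theorem bigConj_imp_of_mem {φ : Formula} {s : Finset Formula} (h : φ ∈ s) :
    Prv d (imp (bigConj s) φ) :=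
  conjList_imp_of_mem (Finset.mem_toList.2 h)

theorem imp_simNeg_imp_bot (φ : Formula) : Prv d (imp φ (imp (simNeg φ) bot)) :=
  of_isValuation fun v hv => by simp only [hv.imp, hv.simNeg, hv.bot]; cases v φ <;> rfl

theorem tri_of_prv (φ : Formula) {ψ : Formula} (h : Prv d ψ) : Prv d (tri φ ψ) :=
  mp (mono (imp_refl φ) (mp (imp_intro ψ top) h)) (a3 φ)

end Prv

namespace Deriv

variable {Δ : Set Formula}

theorem deduction {φ ψ : Formula} (h : Deriv d (insert φ Δ) ψ) : Deriv d Δ (imp φ ψ) := by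
  induction h with
  | hyp h =>
    rcases h with rfl | h
    · exact thm (Prv.imp_refl _)
    · exact mp (thm (Prv.imp_intro _ _)) (hyp h)
  | thm h => exact mp (thm (Prv.imp_intro _ _)) (thm h)
  | mp _ _ ih₁ ih₂ => exact mp (mp (thm (Prv.imp_distrib _ _ _)) ih₁) ih₂

theorem prv_of_empty {φ : Formula} (h : Deriv d ∅ φ) : Prv d φ := by
  induction h with
  | hyp h => cases h
  | thm h => exact h
  | mp _ _ ih₁ ih₂ => exact Prv.mp ih₁ ih₂

theorem prv_imp_of_singleton {φ ψ : Formula} (h : Deriv d {φ} ψ) : Prv d (imp φ ψ) :=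
  prv_of_empty (deduction (by rwa [insert_empty_eq]))

theorem prv_bigConj_imp {φ : Formula} {s : Finset Formula} (h : Deriv d Δ φ)
    (hs : Δ ⊆ ↑s) : Prv d (imp (bigConj s) φ) := by
  induction h with
  | hyp h => exact Prv.bigConj_imp_of_mem (hs h)
  | thm h => exact Prv.mp (Prv.imp_intro _ _) h
  | mp _ _ ih₁ ih₂ => exact Prv.mp (Prv.mp (Prv.imp_distrib _ _ _) ih₁) ih₂

theorem tri_mono {φ₁ φ₂ ψ₁ ψ₂ : Formula} (hφ : Prv d (imp φ₁ φ₂)) (hψ : Prv d (imp ψ₁ ψ₂))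
    (h : Deriv d Δ (tri φ₂ ψ₁)) : Deriv d Δ (tri φ₁ ψ₂) :=
  mp (thm (Prv.mono hφ hψ)) h

theorem tri_disjList {ψ : Formula} {L : List Formula} (h : ∀ φ ∈ L, Deriv d Δ (tri φ ψ)) :
    Deriv d Δ (tri (disjList L) ψ) := by
  induction L with
  | nil => exact thm (Prv.a2 ψ)
  | cons φ L ih =>
    exact mp (mp (thm (Prv.a1 φ ψ (disjList L))) (h φ List.mem_cons_self))
      (ih fun χ hχ => h χ (List.mem_cons_of_mem _ hχ))

end Deriv

theorem Consistent.insert_or_insert_simNeg {Δ : Set Formula} (hΔ : Consistent d Δ)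
    (φ : Formula) : Consistent d (insert φ Δ) ∨ Consistent d (insert (simNeg φ) Δ) := by
  by_contra! h
  have excluded_middle : Prv d (imp (imp φ bot) (imp (imp (simNeg φ) bot) bot)) :=
    Prv.of_isValuation fun v hv => by
      simp only [hv.imp, hv.bot, hv.simNeg]; cases v φ <;> rfl
  exact hΔ (.mp (.mp (.thm excluded_middle) (.deduction (not_not.1 h.1)))
    (.deduction (not_not.1 h.2)))

namespace MaxCons

variable {Φ w : Finset Formula} {φ : Formula}

theorem simNeg_notMem_of_mem (hw : MaxCons d Φ w) (h : φ ∈ w) : simNeg φ ∉ w :=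
  fun hs => hw.2.1 (.mp (.mp (.thm (Prv.imp_simNeg_imp_bot φ)) (.hyp h)) (.hyp hs))

theorem mem_of_deriv (hw : MaxCons d Φ w) (hφ : φ ∈ Φ) (h : Deriv d ↑w φ) : φ ∈ w := by
  by_contra hn
  exact hw.2.1 (.mp (.mp (.thm (Prv.imp_simNeg_imp_bot φ)) h)
    (.hyp ((hw.2.2 φ hφ).resolve_left hn)))

theorem imp_mem_iff (hw : MaxCons d Φ w) {a b : Formula} (hab : imp a b ∈ Φ) (ha : a ∈ Φ)
    (hb : b ∈ Φ) : imp a b ∈ w ↔ (a ∈ w → b ∈ w) := by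
  refine ⟨fun h h' => hw.mem_of_deriv hb (.mp (.hyp h) (.hyp h')), fun h => ?_⟩
  refine hw.mem_of_deriv hab ?_
  rcases hw.2.2 a ha with h' | h'
  · exact .mp (.thm (Prv.imp_intro b a)) (.hyp (h h'))
  · have ex_falso : Prv d (imp (simNeg a) (imp a b)) :=
      Prv.of_isValuation fun v hv => by
        simp only [hv.imp, hv.simNeg]; cases v a <;> cases v b <;> rfl
    exact .mp (.thm ex_falso) (.hyp h')

end MaxCons

theorem exists_maxCons_superset {Φ s : Finset Formula} (hΦ : SimClosed Φ) (hs : s ⊆ Φ)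
    (hc : Consistent d ↑s) : ∃ t, s ⊆ t ∧ MaxCons d Φ t := by
  refine Finset.induction_on' Φ
    (motive := fun L => ∃ t, s ⊆ t ∧ t ⊆ Φ ∧ Consistent d ↑t ∧ ∀ φ ∈ L, φ ∈ t ∨ simNeg φ ∈ t)
    ⟨s, subset_rfl, hs, hc, by simp⟩ ?_
  rintro φ L hφ - - ⟨t, hst, htΦ, ht, hdec⟩
  have extend : ∀ ψ ∈ Φ, Consistent d ↑(insert ψ t) → φ = ψ ∨ simNeg φ = ψ →
      ∃ t', s ⊆ t' ∧ t' ⊆ Φ ∧ Consistent d ↑t' ∧ ∀ χ ∈ insert φ L, χ ∈ t' ∨ simNeg χ ∈ t' := by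
    intro ψ hψ hcψ hφψ
    refine ⟨insert ψ t, hst.trans (Finset.subset_insert _ _), Finset.insert_subset hψ htΦ, hcψ,
      fun χ hχ => ?_⟩
    rcases Finset.mem_insert.1 hχ with rfl | hχ
    · rcases hφψ with rfl | rfl <;> simp
    · exact (hdec χ hχ).imp (Finset.mem_insert_of_mem ·) (Finset.mem_insert_of_mem ·)
  rcases ht.insert_or_insert_simNeg φ with h | h
  · exact extend φ hφ (by rwa [Finset.coe_insert]) (.inl rfl)
  · exact extend _ (hΦ φ hφ) (by rwa [Finset.coe_insert]) (.inr rfl)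

def completeSubsetsContaining (Φ : Finset Formula) (a : Formula) : Finset (Finset Formula) :=
  Φ.powerset.filter fun u => a ∈ u ∧ ∀ φ ∈ Φ, φ ∈ u ∨ simNeg φ ∈ u

theorem prv_imp_disjList_completeSubsetsContaining {Φ : Finset Formula} (hΦ : SimClosed Φ)
    {a : Formula} (ha : a ∈ Φ) :
    Prv d (imp a (disjList ((completeSubsetsContaining Φ a).toList.map bigConj))) := by
  refine Prv.of_isValuation fun v hv => ?_
  rw [hv.imp, hv.disjList]
  cases hva : v a
  · rfl
  -- the formulas of `Φ` true under `v` form a complete set, and their conjunction is true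
  refine List.any_eq_true.2 ⟨bigConj (Φ.filter (v · = true)), List.mem_map.2 ⟨_, ?_, rfl⟩, ?_⟩
  · simp only [completeSubsetsContaining, Finset.mem_toList, Finset.mem_filter,
      Finset.mem_powerset, Finset.filter_subset, true_and]
    refine ⟨⟨ha, hva⟩, fun φ hφ => ?_⟩
    cases hvφ : v φ
    · exact .inr ⟨hΦ φ hφ, by rw [hv.simNeg, hvφ]; rfl⟩
    · exact .inl ⟨hφ, rfl⟩
  · simp [bigConj, hv.conjList]

theorem deriv_tri_of_not_consistent {Δ : Set Formula} {u : Finset Formula}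
    (hu : ¬ Consistent d ↑u) (ψ : Formula) : Deriv d Δ (tri (bigConj u) ψ) :=
  (Deriv.thm (Prv.a2 ψ)).tri_mono (Deriv.prv_bigConj_imp (not_not.1 hu) subset_rfl)
    (Prv.imp_refl ψ)

variable {Δ : Set Formula} {a b : Formula}

theorem consistent_pair_of_wcons {u : Finset Formula} {θ : Formula}
    (hab : Deriv d Δ (tri a b)) (ha : a ∈ u) (hwc : WCons d Δ u {θ}) :
    Consistent d ↑({θ, b} : Finset Formula) := by
  intro hder
  rw [Finset.coe_insert, Finset.coe_singleton] at hder
  have hb : Prv d (imp b (imp θ bot)) := Deriv.prv_imp_of_singleton hder.deduction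
  have hneg : Prv d (imp (imp θ bot) (neg (bigConj {θ}))) :=
    Prv.of_isValuation fun v hv => by
      simp only [hv.imp, hv.neg, hv.bot, hv.bigConj_singleton]; cases v θ <;> rfl
  exact hwc (hab.tri_mono (Prv.bigConj_imp_of_mem ha) (hb.imp_trans hneg))

theorem consistent_simNeg_of_not_deriv_tri (h : ¬ Deriv d Δ (tri a b)) :
    Consistent d ↑({simNeg b} : Finset Formula) := by
  intro hder
  rw [Finset.coe_singleton] at hder
  have double_neg : Prv d (imp (imp (simNeg b) bot) b) :=
    Prv.of_isValuation fun v hv => by simp only [hv.imp, hv.simNeg, hv.bot]; cases v b <;> rfl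
  exact h (.thm (Prv.tri_of_prv a (double_neg.mp (Deriv.prv_imp_of_singleton hder))))

theorem exists_maxCons_wcons_of_not_deriv_tri {Φ : Finset Formula} (hΦ : SimClosed Φ)
    (ha : a ∈ Φ) (h : ¬ Deriv d Δ (tri a b)) :
    ∃ u, MaxCons d Φ u ∧ a ∈ u ∧ WCons d Δ u {simNeg b} := by
  by_contra! hno
  apply h
  have hb : Prv d (imp (neg (bigConj {simNeg b})) b) :=
    Prv.of_isValuation fun v hv => by
      simp only [hv.imp, hv.neg, hv.bigConj_singleton, hv.simNeg]; cases v b <;> rfl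
  refine (Deriv.tri_disjList fun x hx => ?_).tri_mono
    (prv_imp_disjList_completeSubsetsContaining hΦ ha) hb
  obtain ⟨u, hu, rfl⟩ := List.mem_map.1 hx
  simp only [completeSubsetsContaining, Finset.mem_toList, Finset.mem_filter,
    Finset.mem_powerset] at hu
  obtain ⟨huΦ, hau, hdec⟩ := hu
  by_cases hcu : Consistent d ↑u
  · exact not_not.1 (hno u ⟨huΦ, hcu, hdec⟩ hau)
  · exact deriv_tri_of_not_consistent hcu _

end Derivability

section CanonicalModel

variable {Φ₀ : Finset Formula} {a b : Formula}

local notation:50 W " ⊩ " φ:51 => Forces (Krel _) (Kval _) W φ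

theorem forces_tri_of_mem (hsim : SimClosed Φ₀) (hb : b ∈ Φ₀)
    (iha : ∀ U : KWorld Φ₀, (U ⊩ a) → a ∈ U.1.1) (ihb : ∀ V : KWorld Φ₀, b ∈ V.1.1 → V ⊩ b)
    {W : KWorld Φ₀} (h : tri a b ∈ W.1.1) : W ⊩ tri a b := by
  intro U V hUV hUa
  obtain ⟨t, hθbt, ht⟩ := exists_maxCons_superset hsim
    (Finset.insert_subset U.2.2 (Finset.singleton_subset_iff.2 hb))
    (consistent_pair_of_wcons (.hyp h) (iha U hUa) hUV.1)
  let V' : KWorld Φ₀ := ⟨(t, b), ht, hb⟩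
  exact ⟨V', ⟨hUV.1, hθbt (by simp)⟩, ihb V' (hθbt (by simp))⟩

theorem mem_of_forces_tri (hsim : SimClosed Φ₀) (hab : tri a b ∈ Φ₀) (ha : a ∈ Φ₀)
    (hb : b ∈ Φ₀) (iha : ∀ U : KWorld Φ₀, a ∈ U.1.1 → U ⊩ a)
    (ihb : ∀ V : KWorld Φ₀, (V ⊩ b) → b ∈ V.1.1) {W : KWorld Φ₀} (h : W ⊩ tri a b) :
    tri a b ∈ W.1.1 := by
  by_contra hW
  have hnd : ¬ Deriv false ↑W.1.1 (tri a b) := fun hd => hW (W.2.1.mem_of_deriv hab hd)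
  obtain ⟨u, hu, hau, hwc⟩ := exists_maxCons_wcons_of_not_deriv_tri hsim ha hnd
  obtain ⟨v, hbv, hv⟩ := exists_maxCons_superset hsim
    (Finset.singleton_subset_iff.2 (hsim b hb)) (consistent_simNeg_of_not_deriv_tri hnd)
  let U : KWorld Φ₀ := ⟨(u, simNeg b), hu, hsim b hb⟩
  let V : KWorld Φ₀ := ⟨(v, b), hv, hb⟩
  obtain ⟨V', hUV', hV'b⟩ := h U V ⟨hwc, hbv (Finset.mem_singleton_self _)⟩ (iha U hau)
  exact V'.2.1.simNeg_notMem_of_mem (ihb V' hV'b) hUV'.2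

end CanonicalModel

/-- Truth lemma for the canonical model K of ℜ: for every φ ∈ Φ₀ and every
world (w,ψ) of K, φ ∈ w iff (w,ψ) ⊩ φ. -/
theorem truth_lemma_K (Φ₀ : Finset Formula)
    (hsub : SubClosed Φ₀) (hsim : SimClosed Φ₀)
    (φ : Formula) (hφ : φ ∈ Φ₀) (W : KWorld Φ₀) :
    φ ∈ W.1.1 ↔ Forces (Krel Φ₀) (Kval Φ₀) W φ := by
  induction φ generalizing W with
  | var p => exact Iff.rfl
  | bot => exact ⟨fun h => W.2.1.2.1 (.hyp h), False.elim⟩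
  | imp a b iha ihb =>
    obtain ⟨ha, hb⟩ := hsub.1 a b hφ
    rw [W.2.1.imp_mem_iff hφ ha hb]
    exact imp_congr (iha ha W) (ihb hb W)
  | tri a b iha ihb =>
    obtain ⟨ha, hb⟩ := hsub.2 a b hφ
    exact ⟨forces_tri_of_mem hsim hb (fun U => (iha ha U).2) (fun V => (ihb hb V).1),
      mem_of_forces_tri hsim hφ ha hb (fun U => (iha ha U).1) (fun V => (ihb hb V).2)⟩

end Formula
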